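/- arXiv:2309.01282 — 2 statements merged into one kernel-verified Lean document; each statement's English description precedes it below -/
import Mathlib

section
/- Define polynomials f_n in variables ζ_2,...,ζ_{n-1} by f_3 = 1 - ζ_2, f_4 = ζ_2 + ζ_3 - 1, and f_n = -f_{n-1} - ζ_{n-1} f_{n-2} for n ≥ 5. Then f_n = Σ_{k ≤ ⌊(n-1)/2⌋} (-1)^{n+k+1} Σ ζ_{i_1}···ζ_{i_k}, where the inner sum is over index sequences 1 < i_1 < ··· < i_k < n with i_{j+1} - i_j ≥ 2 for all j. -/
noncomputable def f (ζ : ℕ → ℂ) : ℕ → ℂ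
  | 0 => 0
  | 1 => 0
  | 2 => 0
  | 3 => 1 - ζ 2
  | 4 => ζ 2 + ζ 3 - 1
  | n + 5 => -f ζ (n + 4) - ζ (n + 4) * f ζ (n + 3)

noncomputable def A (ζ : ℕ → ℂ) (n k : ℕ) : ℂ :=
  ∑ s ∈ (Finset.Ioo 1 n).powerset.filter
      (fun s => s.card = k ∧ ∀ i ∈ s, i + 1 ∉ s),
    ∏ i ∈ s, ζ i

lemma A_zero (ζ : ℕ → ℂ) (n : ℕ) : A ζ n 0 = 1 := by
  unfold A
  have h : (Finset.Ioo 1 n).powerset.filter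
      (fun s => s.card = 0 ∧ ∀ i ∈ s, i + 1 ∉ s) = {∅} := by
    ext s
    simp [Finset.card_eq_zero]
    constructor
    · rintro ⟨_, h, _⟩; exact h
    · rintro rfl; simp
  rw [h]; simp

lemma A_vanish (ζ : ℕ → ℂ) {n k : ℕ} (hk : 1 ≤ k) (h : n ≤ 2 * k) : A ζ n k = 0 := by
  unfold A
  rw [show (Finset.Ioo 1 n).powerset.filter
      (fun s => s.card = k ∧ ∀ i ∈ s, i + 1 ∉ s) = ∅ from ?_, Finset.sum_empty]
  rw [Finset.filter_eq_empty_iff]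
  rintro s hs ⟨hcard, hadj⟩
  have hsub : s ⊆ Finset.Ioo 1 n := Finset.mem_powerset.mp hs
  have hdisj : Disjoint s (s.image (· + 1)) := by
    rw [Finset.disjoint_left]
    intro a ha hb
    simp only [Finset.mem_image] at hb
    obtain ⟨i, hi, rfl⟩ := hb
    exact hadj i hi ha
  have hunion : s ∪ s.image (· + 1) ⊆ Finset.Icc 2 n := by
    intro a ha
    rw [Finset.mem_union] at ha
    rcases ha with ha | ha
    · have := hsub ha; rw [Finset.mem_Ioo] at this; rw [Finset.mem_Icc]; omega
    · simp only [Finset.mem_image] at ha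
      obtain ⟨i, hi, rfl⟩ := ha
      have := hsub hi; rw [Finset.mem_Ioo] at this; rw [Finset.mem_Icc]; omega
  have hle := Finset.card_le_card hunion
  rw [Finset.card_union_of_disjoint hdisj,
    Finset.card_image_of_injective _ (add_left_injective 1), hcard, Nat.card_Icc] at hle
  omega

lemma A_rec (ζ : ℕ → ℂ) (n k : ℕ) :
    A ζ (n + 3) (k + 1) = A ζ (n + 2) (k + 1) + ζ (n + 2) * A ζ (n + 1) k := by
  have hins : Finset.Ioo 1 (n + 3) = insert (n + 2) (Finset.Ioo 1 (n + 2)) := by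
    ext a
    simp only [Finset.mem_Ioo, Finset.mem_insert]
    omega
  have hnot : (n + 2) ∉ Finset.Ioo 1 (n + 2) := by simp
  unfold A
  simp only [Finset.sum_filter]
  rw [hins, Finset.sum_powerset_insert hnot]
  congr 1
  rw [Finset.mul_sum]
  have hsub : (Finset.Ioo 1 (n + 1)).powerset ⊆ (Finset.Ioo 1 (n + 2)).powerset := by
    apply Finset.powerset_mono.mpr
    apply Finset.Ioo_subset_Ioo le_rfl (by omega)
  rw [← Finset.sum_subset hsub ?_]
  · apply Finset.sum_congr rfl
    intro t ht
    rw [Finset.mem_powerset] at ht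
    have hn1 : n + 2 ∉ t := fun h => by have := ht h; simp at this
    have hnt : n + 1 ∉ t := fun h => by have := ht h; rw [Finset.mem_Ioo] at this; omega
    have hcond : ((insert (n + 2) t).card = k + 1 ∧ ∀ i ∈ insert (n + 2) t, i + 1 ∉ insert (n + 2) t)
        ↔ (t.card = k ∧ ∀ i ∈ t, i + 1 ∉ t) := by
      rw [Finset.card_insert_of_notMem hn1]
      constructor
      · rintro ⟨hc, ha⟩
        refine ⟨by omega, fun i hi hi1 => ha i (Finset.mem_insert_of_mem hi) (Finset.mem_insert_of_mem hi1)⟩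
      · rintro ⟨hc, ha⟩
        refine ⟨by omega, fun i hi => ?_⟩
        rw [Finset.mem_insert] at hi
        rcases hi with rfl | hi
        · intro hmem
          rw [Finset.mem_insert] at hmem
          rcases hmem with h | h
          · omega
          · have := ht h; rw [Finset.mem_Ioo] at this; omega
        · intro hmem
          rw [Finset.mem_insert] at hmem
          rcases hmem with h | h
          · have := ht hi; rw [Finset.mem_Ioo] at this; omega
          · exact ha i hi h
    rw [if_congr hcond rfl rfl, Finset.prod_insert hn1, mul_ite, mul_zero]
  · intro t ht htn
    rw [Finset.mem_powerset] at ht htn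
    have hn1 : n + 2 ∉ t := fun h => by have := ht h; simp at this
    have hnmem : n + 1 ∈ t := by
      by_contra hnn
      apply htn
      intro a ha
      have := ht ha
      rw [Finset.mem_Ioo] at this ⊢
      refine ⟨this.1, ?_⟩
      rcases Nat.lt_succ_iff_lt_or_eq.mp this.2 with h | rfl
      · exact h
      · exact absurd ha hnn
    rw [if_neg]
    rintro ⟨_, ha⟩
    exact ha (n + 1) (Finset.mem_insert_of_mem hnmem) (Finset.mem_insert_self _ _)

lemma A31 (ζ : ℕ → ℂ) : A ζ 3 1 = ζ 2 := by
  unfold A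
  rw [show (Finset.Ioo 1 3).powerset.filter
      (fun s => s.card = 1 ∧ ∀ i ∈ s, i + 1 ∉ s) = {{2}} by decide]
  simp

lemma A41 (ζ : ℕ → ℂ) : A ζ 4 1 = ζ 2 + ζ 3 := by
  unfold A
  rw [show (Finset.Ioo 1 4).powerset.filter
      (fun s => s.card = 1 ∧ ∀ i ∈ s, i + 1 ∉ s) = {{2}, {3}} by decide]
  rw [Finset.sum_insert (by decide), Finset.sum_singleton]
  simp

lemma fmain (ζ : ℕ → ℂ) : ∀ m : ℕ,
    f ζ (m + 3) = ∑ k ∈ Finset.range (m + 3), (-1 : ℂ) ^ (m + k) * A ζ (m + 3) k := by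
  intro m
  induction m using Nat.strong_induction_on with
  | _ m ih =>
    match m with
    | 0 =>
      rw [show f ζ (0 + 3) = 1 - ζ 2 from rfl]
      rw [show (0 : ℕ) + 3 = 3 from rfl]
      rw [Finset.sum_range_succ, Finset.sum_range_succ, Finset.sum_range_succ,
        Finset.sum_range_zero, A_zero, A31, A_vanish ζ (by norm_num) (by norm_num)]
      norm_num
      ring
    | 1 =>
      rw [show f ζ (1 + 3) = ζ 2 + ζ 3 - 1 from rfl]
      rw [show (1 : ℕ) + 3 = 4 from rfl]
      rw [Finset.sum_range_succ, Finset.sum_range_succ, Finset.sum_range_succ,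
        Finset.sum_range_succ, Finset.sum_range_zero, A_zero, A41,
        A_vanish ζ (by norm_num) (by norm_num), A_vanish ζ (by norm_num) (by norm_num)]
      norm_num
      ring
    | (m + 2) =>
      have ih1 : f ζ (m + 4) = ∑ k ∈ Finset.range (m + 4), (-1 : ℂ) ^ (m + 1 + k) * A ζ (m + 4) k :=
        ih (m + 1) (by omega)
      have ih0 : f ζ (m + 3) = ∑ k ∈ Finset.range (m + 3), (-1 : ℂ) ^ (m + k) * A ζ (m + 3) k :=
        ih m (by omega)
      show f ζ (m + 5) = ∑ k ∈ Finset.range (m + 5), (-1 : ℂ) ^ (m + 2 + k) * A ζ (m + 5) k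
      rw [show f ζ (m + 5) = -f ζ (m + 4) - ζ (m + 4) * f ζ (m + 3) from rfl, ih1, ih0]
      -- decompose LHS sum on goal's RHS
      have hL : ∑ k ∈ Finset.range (m + 5), (-1 : ℂ) ^ (m + 2 + k) * A ζ (m + 5) k
          = ∑ k ∈ Finset.range (m + 4), (-1 : ℂ) ^ (m + 2 + (k + 1)) * A ζ (m + 5) (k + 1)
            + (-1 : ℂ) ^ (m + 2 + 0) * A ζ (m + 5) 0 :=
        Finset.sum_range_succ' _ (m + 4)
      have hR1 : ∑ k ∈ Finset.range (m + 4), (-1 : ℂ) ^ (m + 1 + k) * A ζ (m + 4) k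
          = ∑ k ∈ Finset.range (m + 3), (-1 : ℂ) ^ (m + 1 + (k + 1)) * A ζ (m + 4) (k + 1)
            + (-1 : ℂ) ^ (m + 1 + 0) * A ζ (m + 4) 0 :=
        Finset.sum_range_succ' _ (m + 3)
      -- extend the range-(m+3) sums to range (m+4)
      have hE1 : ∑ k ∈ Finset.range (m + 3), (-1 : ℂ) ^ (m + 1 + (k + 1)) * A ζ (m + 4) (k + 1)
          = ∑ k ∈ Finset.range (m + 4), (-1 : ℂ) ^ (m + 1 + (k + 1)) * A ζ (m + 4) (k + 1) := by
        rw [Finset.sum_range_succ _ (m + 3), A_vanish ζ (by omega) (by omega), mul_zero, add_zero]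
      have hE2 : ∑ k ∈ Finset.range (m + 3), (-1 : ℂ) ^ (m + k) * A ζ (m + 3) k
          = ∑ k ∈ Finset.range (m + 4), (-1 : ℂ) ^ (m + k) * A ζ (m + 3) k := by
        rw [Finset.sum_range_succ _ (m + 3), A_vanish ζ (by omega) (by omega), mul_zero, add_zero]
      rw [hL, hR1, hE1, hE2, A_zero, A_zero]
      have hrec : ∀ k, A ζ (m + 5) (k + 1) = A ζ (m + 4) (k + 1) + ζ (m + 4) * A ζ (m + 3) k :=
        fun k => A_rec ζ (m + 2) k
      simp only [hrec]
      have key : ∀ k ∈ Finset.range (m + 4),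
          (-1 : ℂ) ^ (m + 2 + (k + 1)) * (A ζ (m + 4) (k + 1) + ζ (m + 4) * A ζ (m + 3) k)
          = -((-1 : ℂ) ^ (m + 1 + (k + 1)) * A ζ (m + 4) (k + 1))
            - ζ (m + 4) * ((-1 : ℂ) ^ (m + k) * A ζ (m + 3) k) := by
        intro k _
        rw [show m + 2 + (k + 1) = m + k + 1 + 1 + 1 from by omega,
          show m + 1 + (k + 1) = m + k + 1 + 1 from by omega]
        simp only [pow_succ]
        ring
      rw [Finset.sum_congr rfl key, Finset.sum_sub_distrib, Finset.sum_neg_distrib,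
        ← Finset.mul_sum]
      rw [show m + 2 + 0 = m + 1 + 0 + 1 from by omega, pow_succ]
      ring

theorem stmt0 (ζ : ℕ → ℂ) (n : ℕ) (hn : 3 ≤ n) :
    f ζ n = ∑ k ∈ Finset.range ((n - 1) / 2 + 1),
      (-1 : ℂ) ^ (n + k + 1) *
        ∑ s ∈ (Finset.Ioo 1 n).powerset.filter
            (fun s => s.card = k ∧ ∀ i ∈ s, i + 1 ∉ s),
          ∏ i ∈ s, ζ i := by
  obtain ⟨m, rfl⟩ : ∃ m, n = m + 3 := ⟨n - 3, by omega⟩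
  show f ζ (m + 3) = ∑ k ∈ Finset.range ((m + 3 - 1) / 2 + 1),
      (-1 : ℂ) ^ (m + 3 + k + 1) * A ζ (m + 3) k
  rw [fmain ζ m, show (m + 3 - 1) / 2 + 1 = (m + 2) / 2 + 1 from by omega]
  have hsub : Finset.range ((m + 2) / 2 + 1) ⊆ Finset.range (m + 3) :=
    Finset.range_subset_range.mpr (by omega)
  have hz : ∀ k ∈ Finset.range (m + 3), k ∉ Finset.range ((m + 2) / 2 + 1) →
      (-1 : ℂ) ^ (m + 3 + k + 1) * A ζ (m + 3) k = 0 := by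
    intro k _ hk
    rw [Finset.mem_range, not_lt] at hk
    rw [A_vanish ζ (by omega) (by omega), mul_zero]
  rw [Finset.sum_subset hsub hz]
  refine Finset.sum_congr rfl fun k _ => ?_
  rw [show m + 3 + k + 1 = m + k + 1 + 1 + 1 + 1 from by omega]
  simp only [pow_succ]
  ring
end

section
/- For n = 4 and complex numbers ζ_1, ζ_2, ζ_3, ζ_4, if the product [[0,-ζ_1],[1,-1]]·[[0,-ζ_2],[1,-1]]·[[0,-ζ_3],[1,-1]]·[[0,-ζ_4],[1,-1]] is a nonzero scalar multiple of the identity, then ζ_2 + ζ_3 = 1, ζ_3 + ζ_4 = 1, and ζ_1 + ζ_2 = 1. -/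
noncomputable def M (z : ℂ) : Matrix (Fin 2) (Fin 2) ℂ := !![0, -z; 1, -1]

theorem stmt3 (ζ₁ ζ₂ ζ₃ ζ₄ c : ℂ) (hc : c ≠ 0)
    (h : M ζ₁ * M ζ₂ * M ζ₃ * M ζ₄ = c • (1 : Matrix (Fin 2) (Fin 2) ℂ)) :
    ζ₂ + ζ₃ = 1 ∧ ζ₃ + ζ₄ = 1 ∧ ζ₁ + ζ₂ = 1 := by
  have h00 := congrFun (congrFun h 0) 0
  have h01 := congrFun (congrFun h 0) 1
  have h10 := congrFun (congrFun h 1) 0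
  have h11 := congrFun (congrFun h 1) 1
  simp [M, Matrix.mul_apply, Fin.sum_univ_succ, Matrix.one_apply] at h00 h01 h10 h11
  have hz1 : ζ₁ ≠ 0 := by
    intro h0
    exact hc (by rw [h0] at h00; linear_combination -h00)
  have h23 : ζ₂ + ζ₃ = 1 := by linear_combination h10
  have h34 : ζ₃ + ζ₄ = 1 := by
    have hm : ζ₁ * (ζ₃ + ζ₄ - 1) = 0 := by linear_combination -h01
    rcases mul_eq_zero.1 hm with h' | h'
    · exact absurd h' hz1
    · linear_combination h'
  have h3 : ζ₃ - 1 ≠ 0 := by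
    intro h'
    exact hc (by linear_combination -h00 + ζ₁ * h')
  have key : (ζ₁ - ζ₃) * (ζ₃ - 1) = 0 := by
    linear_combination h00 - h11 + (ζ₄ - 1) * h10 - ζ₃ * h34
  rcases mul_eq_zero.1 key with h' | h'
  · exact ⟨h23, h34, by linear_combination h' + h23⟩
  · exact absurd h' h3
end
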